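/- arXiv:1006.5516 — 2 statements merged into one kernel-verified Lean document; each statement's English description precedes it below -/
import Mathlib

section
/- Let R be a left-linear generalized semi-monadic TRS (GSM-TRS) over a ranked alphabet Σ. Then for every finite tree language L ⊆ T_Σ, the descendant set R*_Σ(L) is a recognizable tree language over Σ. -/
set_option autoImplicit false

/-!
Basic framework: ranked alphabets, terms, term rewrite systems,
bottom-up tree automata, recognizability.
A ranked alphabet is modelled by a (finite) type `σ` together with an
arity function `ar : σ → ℕ`.  `Tm.var n` denotes the variable `x_{n+1}`,
so `T_Σ(X_m)` corresponds to terms all of whose variables satisfy `n < m`,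
and ground terms (`T_Σ`) are terms satisfying `Tm.Ground`.
-/

/-- Terms over the ranked alphabet `(σ, ar)` with variables `x₁, x₂, …`
(`var n` is `x_{n+1}`). -/
inductive Tm (σ : Type) (ar : σ → ℕ) : Type
  | var : ℕ → Tm σ ar
  | app : (f : σ) → (Fin (ar f) → Tm σ ar) → Tm σ ar

namespace Tm

variable {σ γ : Type} {ar : σ → ℕ} {arγ : γ → ℕ}

/-- Application of a substitution `θ` (assigning a term to each variable). -/
def subst (θ : ℕ → Tm σ ar) : Tm σ ar → Tm σ ar
  | var n => θ n
  | app f ts => app f fun i => (ts i).subst θ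

/-- A term is ground if it contains no variables. -/
def Ground : Tm σ ar → Prop
  | var _ => False
  | app _ ts => ∀ i, (ts i).Ground

/-- The set of (indices of) variables occurring in a term. -/
def vars : Tm σ ar → Set ℕ
  | var n => {n}
  | app _ ts => ⋃ i, (ts i).vars

/-- Number of occurrences of the variable `x_{n+1}` in a term. -/
def count (n : ℕ) : Tm σ ar → ℕ
  | var m => if m = n then 1 else 0
  | app _ ts => ∑ i, (ts i).count n

/-- A term is linear if every variable occurs at most once in it. -/
def Linear (t : Tm σ ar) : Prop := ∀ n, t.count n ≤ 1

/-- The symbol `s` occurs in the term. -/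
def symOccurs (s : σ) : Tm σ ar → Prop
  | var _ => False
  | app f ts => f = s ∨ ∃ i, (ts i).symOccurs s

/-- Height of a term (constants and variables have height 0). -/
def height : Tm σ ar → ℕ
  | var _ => 0
  | app _ ts => Finset.univ.sup fun i => (ts i).height + 1

/-- Renaming of the alphabet along an arity-preserving map. -/
def map (ι : σ → γ) (h : ∀ s, arγ (ι s) = ar s) : Tm σ ar → Tm γ arγ
  | var n => var n
  | app f ts => app (ι f) fun i => (ts (Fin.cast (h f) i)).map ι h

/-- The subterm of `t` at a position (a list of argument indices), if defined. -/
def subAt : Tm σ ar → List ℕ → Option (Tm σ ar)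
  | t, [] => some t
  | var _, _ :: _ => none
  | app f ts, i :: p => if h : i < ar f then (ts ⟨i, h⟩).subAt p else none

/-- Subterm relation. -/
inductive Subtm : Tm σ ar → Tm σ ar → Prop
  | refl (t : Tm σ ar) : Subtm t t
  | app {s : Tm σ ar} {f : σ} {ts : Fin (ar f) → Tm σ ar} (i : Fin (ar f)) :
      Subtm s (ts i) → Subtm s (Tm.app f ts)

end Tm

section Rewriting

variable {σ γ : Type} {ar : σ → ℕ} {arγ : γ → ℕ}

/-- One-step rewriting by the rule set `R`: apply a rule under a substitution
at the root, or rewrite inside one argument. -/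
inductive Step (R : Set (Tm σ ar × Tm σ ar)) : Tm σ ar → Tm σ ar → Prop
  | rule {l r : Tm σ ar} (θ : ℕ → Tm σ ar) (h : (l, r) ∈ R) :
      Step R (l.subst θ) (r.subst θ)
  | congr {f : σ} {ts : Fin (ar f) → Tm σ ar} {t' : Tm σ ar} (i : Fin (ar f)) :
      Step R (ts i) t' → Step R (Tm.app f ts) (Tm.app f (Function.update ts i t'))

/-- Many-step rewriting: reflexive-transitive closure of `Step`. -/
def Steps (R : Set (Tm σ ar × Tm σ ar)) : Tm σ ar → Tm σ ar → Prop :=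
  Relation.ReflTransGen (Step R)

/-- `R` is a term rewrite system: finitely many rules, and every variable of a
right-hand side occurs in the corresponding left-hand side. -/
def IsTRS (R : Set (Tm σ ar × Tm σ ar)) : Prop :=
  R.Finite ∧ ∀ lr ∈ R, lr.2.vars ⊆ lr.1.vars

/-- The set `R*(L)` of descendants of members of `L`. -/
def Desc (R : Set (Tm σ ar × Tm σ ar)) (L : Set (Tm σ ar)) : Set (Tm σ ar) :=
  {p | ∃ q ∈ L, Steps R q p}

/-- `R` is terminating: there is no infinite reduction sequence. -/
def Terminating (R : Set (Tm σ ar × Tm σ ar)) : Prop :=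
  ¬ ∃ f : ℕ → Tm σ ar, ∀ n, Step R (f n) (f (n + 1))

/-- `R` is confluent. -/
def Confluent (R : Set (Tm σ ar × Tm σ ar)) : Prop :=
  ∀ a b c, Steps R a b → Steps R a c → ∃ d, Steps R b d ∧ Steps R c d

/-- `u` is an `R`-normal form of `t`. -/
def NormalFormOf (R : Set (Tm σ ar × Tm σ ar)) (t u : Tm σ ar) : Prop :=
  Steps R t u ∧ ¬ ∃ v, Step R u v

/-- The term is a variable. -/
def IsVarTm (t : Tm σ ar) : Prop := ∃ n, t = Tm.var n

/-- Every left-hand side is linear. -/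
def LeftLinearTRS (R : Set (Tm σ ar × Tm σ ar)) : Prop :=
  ∀ lr ∈ R, lr.1.Linear

/-- All left- and right-hand sides are linear. -/
def LinearTRS (R : Set (Tm σ ar × Tm σ ar)) : Prop :=
  ∀ lr ∈ R, lr.1.Linear ∧ lr.2.Linear

/-- No rule has a variable as left-hand side or as right-hand side. -/
def CollapseFree (R : Set (Tm σ ar × Tm σ ar)) : Prop :=
  ∀ lr ∈ R, ¬ IsVarTm lr.1 ∧ ¬ IsVarTm lr.2

/-- Transport of a rule set along an arity-preserving renaming of the alphabet. -/
def mapRules (ι : σ → γ) (h : ∀ s, arγ (ι s) = ar s) (R : Set (Tm σ ar × Tm σ ar)) :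
    Set (Tm γ arγ × Tm γ arγ) :=
  (fun lr => (lr.1.map ι h, lr.2.map ι h)) '' R

end Rewriting

/-- A bottom-up tree automaton over `(σ, ar)` with state type `Q`:
transition rules `δ(q₁,…,qₙ) → q`, λ-rules `q → q'`, and final states. -/
structure BTA (σ : Type) (ar : σ → ℕ) (Q : Type) where
  trans : ∀ f : σ, (Fin (ar f) → Q) → Q → Prop
  eps : Q → Q → Prop
  final : Q → Prop

namespace BTA

variable {σ : Type} {ar : σ → ℕ} {Q : Type}

/-- `t →* q`: the (ground) term `t` can be rewritten to the state `q`. -/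
inductive Reach (A : BTA σ ar Q) : Tm σ ar → Q → Prop
  | app {f : σ} {ts : Fin (ar f) → Tm σ ar} {qs : Fin (ar f) → Q} {q : Q} :
      (∀ i, Reach A (ts i) (qs i)) → A.trans f qs q → Reach A (Tm.app f ts) q
  | eps {t : Tm σ ar} {q q' : Q} : Reach A t q → A.eps q q' → Reach A t q'

/-- The tree language recognized by the automaton. -/
def Lang (A : BTA σ ar Q) : Set (Tm σ ar) := {t | ∃ q, A.final q ∧ A.Reach t q}

end BTA

/-- A tree language is recognizable if some bottom-up tree automaton with a
finite state set recognizes it. -/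
def Recognizable {σ : Type} {ar : σ → ℕ} (L : Set (Tm σ ar)) : Prop :=
  ∃ (Q : Type) (_ : Finite Q) (A : BTA σ ar Q), A.Lang = L

/-- `R` (a TRS over all of `σ`, thought of as `sign(R)`) preserves
recognizability of finite tree languages: for every ranked alphabet extending
`σ` (i.e. every finite type with an arity-preserving injection from `σ`) and
every finite tree language of ground terms, the descendant set is recognizable. -/
def PRF {σ : Type} {ar : σ → ℕ} (R : Set (Tm σ ar × Tm σ ar)) : Prop :=
  ∀ (γ : Type) (arγ : γ → ℕ), Finite γ →
    ∀ ι : σ → γ, Function.Injective ι →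
      ∀ h : ∀ s, arγ (ι s) = ar s,
        ∀ L : Set (Tm γ arγ), L.Finite → (∀ t ∈ L, t.Ground) →
          Recognizable (Desc (mapRules ι h R) L)

/-- `R` preserves recognizability: as `PRF`, but for arbitrary recognizable
tree languages. -/
def PR {σ : Type} {ar : σ → ℕ} (R : Set (Tm σ ar × Tm σ ar)) : Prop :=
  ∀ (γ : Type) (arγ : γ → ℕ), Finite γ →
    ∀ ι : σ → γ, Function.Injective ι →
      ∀ h : ∀ s, arγ (ι s) = ar s,
        ∀ L : Set (Tm γ arγ), Recognizable L →
          Recognizable (Desc (mapRules ι h R) L)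

/-! ### Statement 7: left-linear GSM-TRSs preserve recognizability of finite
tree languages. -/

section GSM

variable {σ : Type} {ar : σ → ℕ}

/-- `θ` unifies `a` and `b`. -/
def Unifies (θ : ℕ → Tm σ ar) (a b : Tm σ ar) : Prop := a.subst θ = b.subst θ

/-- `θ` is a most general unifier of `a` and `b`. -/
def IsMGU (θ : ℕ → Tm σ ar) (a b : Tm σ ar) : Prop :=
  Unifies θ a b ∧ ∀ τ, Unifies τ a b → ∃ ρ, ∀ n, τ n = (θ n).subst ρ

/-- `u` is a supertree of `v`: `u` is linear and `v` is a substitution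
instance of `u`. -/
def Supertree (u v : Tm σ ar) : Prop := u.Linear ∧ ∃ θ, u.subst θ = v

/-- `R` is a generalized semi-monadic TRS (GSM-TRS): no left-hand side is a
variable, and for any rules `l₁ → r₁`, `l₂ → r₂` of `R`, positions
`α ∈ POS(r₁)`, `β ∈ POS(l₂)`, and supertree `l₃` of `l₂/β` with
`var(l₃) ∩ var(l₁) = ∅`, if `α = λ` or `β = λ` and `θ` is a most general
unifier of `r₁/α` and `l₃`, then `l₂/β` is a variable, or for each
`γ ∈ POS(l₃)` with `l₂/βγ` a variable, `θ(l₃/γ)` is a variable or ground. -/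
def GSM (R : Set (Tm σ ar × Tm σ ar)) : Prop :=
  (∀ lr ∈ R, ¬ IsVarTm lr.1) ∧
  ∀ l₁ r₁ l₂ r₂ : Tm σ ar, (l₁, r₁) ∈ R → (l₂, r₂) ∈ R →
    ∀ (α β : List ℕ) (r₁α l₂β : Tm σ ar),
      r₁.subAt α = some r₁α → l₂.subAt β = some l₂β →
      ∀ l₃ : Tm σ ar, Supertree l₃ l₂β → (∀ n ∈ l₃.vars, n ∉ l₁.vars) →
        (α = [] ∨ β = []) →
        ∀ θ, IsMGU θ r₁α l₃ →
          IsVarTm l₂β ∨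
            ∀ (γ : List ℕ) (l₃γ : Tm σ ar), l₃.subAt γ = some l₃γ →
              (∃ v, l₂.subAt (β ++ γ) = some v ∧ IsVarTm v) →
              (IsVarTm (l₃γ.subst θ) ∨ (l₃γ.subst θ).Ground)

end GSM

/-!
The descendants of `L` are recognized by an automaton whose states are the finitely many ground
terms `w g`, with `w` a subterm of a right-hand side or a ground subterm of `L` or of a rule, and
`g` mapping the variables of `w` to such ground subterms; state `t` reads `f(t₁, …, tₙ)` when
`t →* f(t₁, …, tₙ)`. This is correct as soon as every reduction `t →* f(p₁, …, pₙ)` from a state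
passes through some `f(t₁, …, tₙ)` with states `tᵢ →* pᵢ`.

Without root steps the arguments of `t` are such states. Otherwise let `l' τ → r' τ` be the last
root step: matching the linear `l'` top-down against the pattern `w` of `t = w g` replays
`t →* l' τ` as `t →* l' g'` with `g'` ranging over ground subterms (by induction on the length of
the reduction, then on the subterm of `l'` being matched), and `r' g'` supplies the states. When a
variable of a left-hand side meets a non-variable subterm of a right-hand side in such a
matching, the GSM condition, applied to the linear generalization of the left-hand side along the
matched path, forces that subterm to be ground.
-/

namespace Tm

variable {σ : Type} {ar : σ → ℕ}

theorem mem_vars_app {f : σ} {ts : Fin (ar f) → Tm σ ar} {i : Fin (ar f)} {x : ℕ}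
    (hx : x ∈ (ts i).vars) : x ∈ (app f ts).vars :=
  Set.mem_iUnion.2 ⟨i, hx⟩

theorem not_isVarTm_app {f : σ} {ts : Fin (ar f) → Tm σ ar} : ¬ IsVarTm (app f ts) := by
  rintro ⟨n, ⟨⟩⟩

theorem subst_congr {t : Tm σ ar} {θ τ : ℕ → Tm σ ar} (h : ∀ x ∈ t.vars, θ x = τ x) :
    t.subst θ = t.subst τ := by
  induction t with
  | var n => exact h n rfl
  | app f ts ih => exact congrArg (app f) (funext fun i => ih i fun x hx => h x (mem_vars_app hx))

theorem eq_of_subst_eq {t : Tm σ ar} {θ τ : ℕ → Tm σ ar} (h : t.subst θ = t.subst τ) :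
    ∀ x ∈ t.vars, θ x = τ x := by
  induction t with
  | var n => rintro x rfl; exact h
  | app f ts ih =>
    intro x hx
    obtain ⟨i, hi⟩ := Set.mem_iUnion.1 hx
    injection h with _ h
    exact ih i (congrFun h i) x hi

theorem subst_subst (t : Tm σ ar) (θ τ : ℕ → Tm σ ar) :
    (t.subst θ).subst τ = t.subst fun n => (θ n).subst τ := by
  induction t with
  | var n => rfl
  | app f ts ih => exact congrArg (app f) (funext ih)

@[simp]
theorem subst_var (t : Tm σ ar) : t.subst var = t := by
  induction t with
  | var n => rfl
  | app f ts ih => exact congrArg (app f) (funext ih)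

theorem subst_eq_self {t : Tm σ ar} {θ : ℕ → Tm σ ar} (h : ∀ x ∈ t.vars, θ x = var x) :
    t.subst θ = t := by
  rw [subst_congr h, subst_var]

theorem ground_iff_vars_eq_empty {t : Tm σ ar} : t.Ground ↔ t.vars = ∅ := by
  induction t with
  | var n => simp [Ground, vars]
  | app f ts ih => simp only [Ground, vars, Set.iUnion_eq_empty, ih]

theorem Ground.subst_eq {t : Tm σ ar} (h : t.Ground) (θ : ℕ → Tm σ ar) : t.subst θ = t :=
  subst_eq_self fun x hx => by simp [ground_iff_vars_eq_empty.1 h] at hx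

theorem Ground.not_isVarTm {t : Tm σ ar} (h : t.Ground) : ¬ IsVarTm t := by
  rintro ⟨n, rfl⟩
  exact h

theorem ground_subst {t : Tm σ ar} {θ : ℕ → Tm σ ar} (h : ∀ x ∈ t.vars, (θ x).Ground) :
    (t.subst θ).Ground := by
  induction t with
  | var n => exact h n rfl
  | app f ts ih => exact fun i => ih i fun x hx => h x (mem_vars_app hx)

theorem Ground.of_subst {t : Tm σ ar} {θ : ℕ → Tm σ ar} (h : (t.subst θ).Ground) :
    ∀ x ∈ t.vars, (θ x).Ground := by
  induction t with
  | var n => rintro x rfl; exact h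
  | app f ts ih =>
    intro x hx
    obtain ⟨i, hi⟩ := Set.mem_iUnion.1 hx
    exact ih i (h i) x hi

theorem vars_finite (t : Tm σ ar) : t.vars.Finite := by
  induction t with
  | var n => exact Set.finite_singleton n
  | app f ts ih => exact Set.finite_iUnion ih

theorem count_pos_iff {t : Tm σ ar} {n : ℕ} : 0 < t.count n ↔ n ∈ t.vars := by
  induction t with
  | var m => by_cases h : m = n <;> simp [count, vars, h, Ne.symm]
  | app f ts ih => simp [count, vars, Finset.sum_pos_iff, ih]

theorem count_eq_zero {t : Tm σ ar} {n : ℕ} (h : n ∉ t.vars) : t.count n = 0 :=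
  Nat.eq_zero_of_not_pos (mt count_pos_iff.1 h)

theorem linear_var (n : ℕ) : (var n : Tm σ ar).Linear := by
  intro m
  simp only [count]
  split <;> omega

theorem linear_app {f : σ} {ts : Fin (ar f) → Tm σ ar} (hlin : ∀ i, (ts i).Linear)
    (hdisj : ∀ i j, i ≠ j → Disjoint (ts i).vars (ts j).vars) : (app f ts).Linear := by
  intro n
  show ∑ i, (ts i).count n ≤ 1
  by_cases hn : ∃ i, n ∈ (ts i).vars
  · obtain ⟨i, hi⟩ := hn
    rw [Finset.sum_eq_single i (fun j _ hji => count_eq_zero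
      (Set.disjoint_left.1 (hdisj i j hji.symm) hi)) (by simp)]
    exact hlin i n
  · push Not at hn
    simp [count_eq_zero (hn _)]

theorem Linear.eq_of_mem_vars {f : σ} {ts : Fin (ar f) → Tm σ ar} (hlin : (app f ts).Linear)
    {x : ℕ} {i j : Fin (ar f)} (hi : x ∈ (ts i).vars) (hj : x ∈ (ts j).vars) : i = j := by
  by_contra hne
  have hpair : (ts i).count x + (ts j).count x ≤ ∑ k, (ts k).count x := by
    rw [← Finset.sum_pair (f := fun k => (ts k).count x) hne]
    exact Finset.sum_le_sum_of_subset (Finset.subset_univ _)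
  have := count_pos_iff.2 hi
  have := count_pos_iff.2 hj
  have : ∑ k, (ts k).count x ≤ 1 := hlin x
  omega

theorem Linear.exists_subst_eq_on_children {f : σ} {us : Fin (ar f) → Tm σ ar}
    (hlin : (app f us).Linear) (θs : Fin (ar f) → ℕ → Tm σ ar) :
    ∃ θ : ℕ → Tm σ ar, ∀ i, ∀ x ∈ (us i).vars, θ x = θs i x := by
  classical
  refine ⟨fun x => if hx : ∃ i, x ∈ (us i).vars then θs hx.choose x else var x,
    fun i x hx => ?_⟩
  have hex : ∃ i, x ∈ (us i).vars := ⟨i, hx⟩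
  simp only [dif_pos hex, hlin.eq_of_mem_vars hex.choose_spec hx]

theorem subAt_nil (t : Tm σ ar) : t.subAt [] = some t := by
  cases t <;> rfl

theorem subAt_append (t : Tm σ ar) (p q : List ℕ) :
    t.subAt (p ++ q) = (t.subAt p).bind fun s => s.subAt q := by
  induction p generalizing t with
  | nil => simp [subAt_nil]
  | cons i p ih =>
    cases t with
    | var n => rfl
    | app f ts =>
      simp only [List.cons_append, subAt]
      split
      · exact ih _
      · rfl

theorem subAt_append_of_eq {t s : Tm σ ar} {p : List ℕ} (h : t.subAt p = some s) (q : List ℕ) :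
    t.subAt (p ++ q) = s.subAt q := by
  rw [subAt_append, h, Option.bind_some]

theorem subAt_child {f : σ} {ts : Fin (ar f) → Tm σ ar} (i : Fin (ar f)) :
    (app f ts).subAt [(i : ℕ)] = some (ts i) := by
  simp [subAt, subAt_nil]

theorem subAt_append_child {t : Tm σ ar} {p : List ℕ} {f : σ} {ts : Fin (ar f) → Tm σ ar}
    (h : t.subAt p = some (app f ts)) (i : Fin (ar f)) :
    t.subAt (p ++ [(i : ℕ)]) = some (ts i) := by
  rw [subAt_append_of_eq h, subAt_child]

theorem subtm_of_subAt {t s : Tm σ ar} {p : List ℕ} (h : t.subAt p = some s) : Subtm s t := by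
  induction p generalizing t with
  | nil => rw [subAt_nil, Option.some_inj] at h; exact h ▸ Subtm.refl t
  | cons i p ih =>
    cases t with
    | var n => cases h
    | app f ts =>
      simp only [subAt] at h
      split at h
      · exact Subtm.app _ (ih h)
      · cases h

theorem Subtm.trans {a b c : Tm σ ar} (hab : Subtm a b) (hbc : Subtm b c) : Subtm a c := by
  induction hbc with
  | refl => exact hab
  | app i _ ih => exact .app i ih

theorem subtm_iff_exists_subAt {s t : Tm σ ar} : Subtm s t ↔ ∃ p, t.subAt p = some s := by
  refine ⟨fun h => ?_, fun ⟨p, hp⟩ => subtm_of_subAt hp⟩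
  induction h with
  | refl => exact ⟨[], subAt_nil s⟩
  | app i _ ih =>
    obtain ⟨p, hp⟩ := ih
    exact ⟨(i : ℕ) :: p, by simpa [subAt] using hp⟩

theorem Subtm.vars_subset {s t : Tm σ ar} (h : Subtm s t) : s.vars ⊆ t.vars := by
  induction h with
  | refl => exact le_rfl
  | app i _ ih => exact fun x hx => mem_vars_app (ih hx)

theorem Subtm.count_le {s t : Tm σ ar} (h : Subtm s t) (n : ℕ) : s.count n ≤ t.count n := by
  induction h with
  | refl => exact le_rfl
  | @app f ts i _ ih =>
    exact ih.trans (Finset.single_le_sum (f := fun j => (ts j).count n)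
      (fun _ _ => Nat.zero_le _) (Finset.mem_univ i))

theorem Subtm.height_le {s t : Tm σ ar} (h : Subtm s t) : s.height ≤ t.height := by
  induction h with
  | refl => exact le_rfl
  | @app f ts i _ ih =>
    exact ih.trans ((Nat.le_succ _).trans
      (Finset.le_sup (f := fun j => (ts j).height + 1) (Finset.mem_univ i)))

theorem Ground.of_subtm {s t : Tm σ ar} (ht : t.Ground) (h : Subtm s t) : s.Ground := by
  rw [ground_iff_vars_eq_empty] at ht ⊢
  exact Set.subset_eq_empty h.vars_subset ht

theorem Linear.of_subtm {s t : Tm σ ar} (ht : t.Linear) (h : Subtm s t) : s.Linear :=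
  fun n => (h.count_le n).trans (ht n)

theorem height_subst_le {t : Tm σ ar} {θ : ℕ → Tm σ ar} {H : ℕ}
    (h : ∀ x ∈ t.vars, (θ x).height ≤ H) : (t.subst θ).height ≤ t.height + H := by
  induction t with
  | var n => simpa [subst, height] using h n rfl
  | app f ts ih =>
    refine Finset.sup_le fun i _ => ?_
    have hi := ih i fun x hx => h x (mem_vars_app hx)
    have := Finset.le_sup (f := fun j => (ts j).height + 1) (Finset.mem_univ i)
    simp only [height] at this ⊢
    omega

theorem height_lt_of_app {f : σ} {ts : Fin (ar f) → Tm σ ar} {H : ℕ} (h : (app f ts).height ≤ H)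
    (i : Fin (ar f)) : (ts i).height < H :=
  Nat.lt_of_lt_of_le (Nat.lt_succ_self _)
    ((Finset.le_sup (f := fun j => (ts j).height + 1) (Finset.mem_univ i)).trans h)

theorem finite_ground_height_le [Finite σ] (H : ℕ) :
    {t : Tm σ ar | t.Ground ∧ t.height ≤ H}.Finite := by
  induction H with
  | zero =>
    refine (Set.finite_range fun f : {f : σ // ar f = 0} =>
      app f.1 fun i => (Fin.cast f.2 i).elim0).subset ?_
    rintro (_ | ⟨f, ts⟩) ⟨hg, hh⟩
    · exact hg.elim
    · have hf : ar f = 0 := Nat.eq_zero_of_not_pos fun hpos =>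
        Nat.not_lt_zero _ (height_lt_of_app hh ⟨0, hpos⟩)
      exact ⟨⟨f, hf⟩, congrArg (app f) (funext fun i => (Fin.cast hf i).elim0)⟩
  | succ H ih =>
    have := ih.to_subtype
    refine (Set.finite_range
      fun p : (Σ f : σ, Fin (ar f) → ↥{t : Tm σ ar | t.Ground ∧ t.height ≤ H}) =>
        app p.1 fun i => (p.2 i).1).subset ?_
    rintro (_ | ⟨f, ts⟩) ⟨hg, hh⟩
    · exact hg.elim
    · exact ⟨⟨f, fun i => ⟨ts i, hg i, Nat.lt_succ_iff.1 (height_lt_of_app hh i)⟩⟩, rfl⟩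

end Tm

section Rewriting

open Tm

variable {σ : Type} {ar : σ → ℕ} (R : Set (Tm σ ar × Tm σ ar))

inductive StepsN : ℕ → Tm σ ar → Tm σ ar → Prop
  | refl (t : Tm σ ar) : StepsN 0 t t
  | tail {n : ℕ} {a b c : Tm σ ar} : StepsN n a b → Step R b c → StepsN (n + 1) a c

inductive NonRootStepsN : ℕ → Tm σ ar → Tm σ ar → Prop
  | refl (t : Tm σ ar) : NonRootStepsN 0 t t
  | tail {n : ℕ} {a : Tm σ ar} {f : σ} {ts : Fin (ar f) → Tm σ ar} {t' : Tm σ ar}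
      (i : Fin (ar f)) : NonRootStepsN n a (app f ts) → Step R (ts i) t' →
      NonRootStepsN (n + 1) a (app f (Function.update ts i t'))

variable {R}

theorem StepsN.trans {m n : ℕ} {a b c : Tm σ ar} (hab : StepsN R m a b) (hbc : StepsN R n b c) :
    StepsN R (m + n) a c := by
  induction hbc with
  | refl => exact hab
  | tail _ step ih => exact (ih hab).tail step

theorem StepsN.steps {n : ℕ} {a b : Tm σ ar} (h : StepsN R n a b) : Steps R a b := by
  induction h with
  | refl => exact .refl
  | tail _ step ih => exact ih.tail step

theorem steps_iff_exists_stepsN {a b : Tm σ ar} : Steps R a b ↔ ∃ n, StepsN R n a b := by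
  refine ⟨fun h => ?_, fun ⟨_, h⟩ => h.steps⟩
  induction h with
  | refl => exact ⟨0, .refl a⟩
  | tail _ step ih => obtain ⟨n, hn⟩ := ih; exact ⟨n + 1, hn.tail step⟩

theorem NonRootStepsN.stepsN {n : ℕ} {a b : Tm σ ar} (h : NonRootStepsN R n a b) :
    StepsN R n a b := by
  induction h with
  | refl => exact .refl _
  | tail i _ step ih => exact ih.tail (Step.congr i step)

theorem StepsN.nonRoot_or_root {n : ℕ} {s t : Tm σ ar} (h : StepsN R n s t) :
    NonRootStepsN R n s t ∨ ∃ (j k : ℕ) (l r : Tm σ ar) (τ : ℕ → Tm σ ar), (l, r) ∈ R ∧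
      j + 1 + k = n ∧ StepsN R j s (l.subst τ) ∧ NonRootStepsN R k (r.subst τ) t := by
  induction h with
  | refl t => exact .inl (.refl t)
  | @tail n a b c h step ih =>
    cases step with
    | rule τ hlr => exact .inr ⟨n, 0, _, _, τ, hlr, rfl, h, .refl _⟩
    | congr i hstep =>
      rcases ih with hnr | ⟨j, k, l, r, τ, hlr, rfl, hpre, hnr⟩
      · exact .inl (hnr.tail i hstep)
      · exact .inr ⟨j, k + 1, l, r, τ, hlr, rfl, hpre, hnr.tail i hstep⟩

theorem NonRootStepsN.exists_of_app {n : ℕ} {f : σ} {as : Fin (ar f) → Tm σ ar} {b : Tm σ ar}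
    (h : NonRootStepsN R n (app f as) b) :
    ∃ (bs : Fin (ar f) → Tm σ ar) (ks : Fin (ar f) → ℕ),
      b = app f bs ∧ ∀ i, ks i ≤ n ∧ StepsN R (ks i) (as i) (bs i) := by
  generalize hstart : app f as = a at h
  induction h with
  | refl => exact ⟨as, fun _ => 0, hstart.symm, fun _ => ⟨Nat.zero_le _, .refl _⟩⟩
  | @tail n a g ts t' i _ step ih =>
    obtain ⟨bs, ks, hb, hks⟩ := ih hstart
    injection hb with hfg hts
    subst hfg
    obtain rfl := eq_of_heq hts
    refine ⟨Function.update ts i t', Function.update ks i (ks i + 1), rfl, fun j => ?_⟩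
    by_cases hj : j = i
    · subst hj
      simp only [Function.update_self]
      exact ⟨by have := (hks j).1; omega, (hks j).2.tail step⟩
    · simp only [Function.update_of_ne hj]
      exact ⟨by have := (hks j).1; omega, (hks j).2⟩

theorem Steps.app_update {f : σ} {ts : Fin (ar f) → Tm σ ar} {t' : Tm σ ar} (i : Fin (ar f))
    (h : Steps R (ts i) t') : Steps R (app f ts) (app f (Function.update ts i t')) := by
  induction h with
  | refl => rw [Function.update_eq_self]; exact .refl
  | @tail b c _ step ih =>
    refine ih.tail ?_
    simpa using Step.congr (R := R) (ts := Function.update ts i b) i (by simpa using step)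

theorem Steps.app_congr {f : σ} {as bs : Fin (ar f) → Tm σ ar} (h : ∀ i, Steps R (as i) (bs i)) :
    Steps R (app f as) (app f bs) := by
  let mix (k : ℕ) : Fin (ar f) → Tm σ ar := fun i => if i.val < k then bs i else as i
  have key : ∀ k, Steps R (app f as) (app f (mix k)) := by
    intro k
    induction k with
    | zero => simpa [mix] using .refl
    | succ k ih =>
      by_cases hk : k < ar f
      · have hmix : mix (k + 1) = Function.update (mix k) ⟨k, hk⟩ (bs ⟨k, hk⟩) := by
          funext i
          by_cases hi : i = ⟨k, hk⟩
          · subst hi; simp [mix]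
          · have : i.val ≠ k := fun h => hi (Fin.ext h)
            simp only [mix, Function.update_of_ne hi]
            split_ifs <;> first | rfl | omega
        rw [hmix]
        exact ih.trans (Steps.app_update _ (by simpa [mix] using h ⟨k, hk⟩))
      · have hmix : mix (k + 1) = mix k := by
          funext i
          have := i.isLt
          simp only [mix]
          split_ifs <;> first | rfl | omega
        rwa [hmix]
  simpa [mix] using key (ar f)

theorem Steps.subst {t : Tm σ ar} {θ τ : ℕ → Tm σ ar} (h : ∀ x ∈ t.vars, Steps R (θ x) (τ x)) :
    Steps R (t.subst θ) (t.subst τ) := by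
  induction t with
  | var n => exact h n rfl
  | app f ts ih => exact Steps.app_congr fun i => ih i fun x hx => h x (mem_vars_app hx)

theorem Step.ground (hvars : ∀ lr ∈ R, lr.2.vars ⊆ lr.1.vars) {a b : Tm σ ar} (h : Step R a b)
    (ha : a.Ground) : b.Ground := by
  induction h with
  | rule τ hlr => exact ground_subst fun x hx => Ground.of_subst ha x (hvars _ hlr hx)
  | @congr f ts t' i _ ih =>
    intro j
    by_cases hj : j = i
    · subst hj; simpa using ih (ha j)
    · simpa [Function.update_of_ne hj] using ha j

theorem Steps.ground (hvars : ∀ lr ∈ R, lr.2.vars ⊆ lr.1.vars) {a b : Tm σ ar}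
    (h : Steps R a b) (ha : a.Ground) : b.Ground := by
  induction h with
  | refl => exact ha
  | tail _ step ih => exact step.ground hvars ih

end Rewriting

section Automaton

open Tm

variable {σ : Type} {ar : σ → ℕ} (R : Set (Tm σ ar × Tm σ ar))

def Factorizes (T : Set (Tm σ ar)) : Prop :=
  ∀ t ∈ T, ∀ (f : σ) (ps : Fin (ar f) → Tm σ ar), Steps R t (app f ps) →
    ∃ ts : Fin (ar f) → Tm σ ar, (∀ i, ts i ∈ T ∧ Steps R (ts i) (ps i)) ∧ Steps R t (app f ts)

def descAutomaton (T L : Set (Tm σ ar)) : BTA σ ar T where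
  trans f qs q := Steps R q.1 (app f fun i => (qs i).1)
  eps _ _ := False
  final q := q.1 ∈ L

variable {R}

theorem descAutomaton_steps_of_reach {T L : Set (Tm σ ar)} {p : Tm σ ar} {q : T}
    (h : (descAutomaton R T L).Reach p q) : Steps R q.1 p := by
  induction h with
  | app _ htrans ih => exact htrans.trans (Steps.app_congr ih)
  | eps _ hfalse => exact hfalse.elim

theorem descAutomaton_reach_of_steps {T L : Set (Tm σ ar)} (hfac : Factorizes R T)
    {p : Tm σ ar} (hp : p.Ground) {q : T} (h : Steps R q.1 p) :
    (descAutomaton R T L).Reach p q := by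
  induction p generalizing q with
  | var n => exact hp.elim
  | app f ps ih =>
    obtain ⟨ts, hts, hq⟩ := hfac q.1 q.2 f ps h
    exact .app (qs := fun i => (⟨ts i, (hts i).1⟩ : T)) (fun i => ih i (hp i) (hts i).2) hq

theorem recognizable_desc_of_factorizes (hvars : ∀ lr ∈ R, lr.2.vars ⊆ lr.1.vars)
    {L T : Set (Tm σ ar)} (hT : T.Finite) (hLT : L ⊆ T) (hground : ∀ t ∈ L, t.Ground)
    (hfac : Factorizes R T) : Recognizable (Desc R L) := by
  have := hT.to_subtype
  refine ⟨T, inferInstance, descAutomaton R T L, Set.eq_of_subset_of_subset ?_ ?_⟩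
  · rintro p ⟨q, hq, hreach⟩
    exact ⟨q.1, hq, descAutomaton_steps_of_reach hreach⟩
  · rintro p ⟨q, hq, hsteps⟩
    exact ⟨⟨q, hLT hq⟩, hq,
      descAutomaton_reach_of_steps hfac (hsteps.ground hvars (hground q hq)) hsteps⟩

end Automaton

section States

open Tm

variable {σ : Type} {ar : σ → ℕ} (R : Set (Tm σ ar × Tm σ ar)) (L : Set (Tm σ ar))

def groundSubterms : Set (Tm σ ar) :=
  {s | s.Ground ∧ ∃ t, (t ∈ L ∨ ∃ lr ∈ R, t = lr.1 ∨ t = lr.2) ∧ Subtm s t}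

def IsPattern (w : Tm σ ar) : Prop :=
  (∃ lr ∈ R, Subtm w lr.2) ∨ w ∈ groundSubterms R L

def stateTerms : Set (Tm σ ar) :=
  {t | ∃ w g, IsPattern R L w ∧ (∀ x ∈ w.vars, g x ∈ groundSubterms R L) ∧ t = w.subst g}

variable {R L}

theorem mem_groundSubterms_of_subtm {s s' : Tm σ ar} (hs : s ∈ groundSubterms R L)
    (h : Subtm s' s) : s' ∈ groundSubterms R L := by
  obtain ⟨hg, t, ht, hst⟩ := hs
  exact ⟨hg.of_subtm h, t, ht, h.trans hst⟩

theorem subset_groundSubterms (hground : ∀ t ∈ L, t.Ground) : L ⊆ groundSubterms R L :=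
  fun t ht => ⟨hground t ht, t, .inl ht, .refl t⟩

theorem IsPattern.child {f : σ} {ws : Fin (ar f) → Tm σ ar} (h : IsPattern R L (app f ws))
    (i : Fin (ar f)) : IsPattern R L (ws i) := by
  rcases h with ⟨lr, hlr, hw⟩ | hw
  · exact .inl ⟨lr, hlr, (Subtm.app i (.refl _)).trans hw⟩
  · exact .inr (mem_groundSubterms_of_subtm hw (.app i (.refl _)))

theorem groundSubterms_subset_stateTerms : groundSubterms R L ⊆ stateTerms R L := fun s hs =>
  ⟨s, var, .inr hs, fun x hx => by simp [ground_iff_vars_eq_empty.1 hs.1] at hx, (subst_var s).symm⟩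

theorem exists_app_pattern_of_mem_stateTerms {t : Tm σ ar} (ht : t ∈ stateTerms R L) :
    ∃ w g, IsPattern R L w ∧ ¬ IsVarTm w ∧ (∀ x ∈ w.vars, g x ∈ groundSubterms R L) ∧
      t = w.subst g := by
  obtain ⟨w, g, hw, hg, rfl⟩ := ht
  cases w with
  | var x =>
    have hx := hg x rfl
    exact ⟨g x, var, .inr hx, hx.1.not_isVarTm,
      fun y hy => by simp [ground_iff_vars_eq_empty.1 hx.1] at hy, (subst_var _).symm⟩
  | app f ws => exact ⟨app f ws, g, hw, not_isVarTm_app, hg, rfl⟩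

theorem stateTerms_finite [Finite σ] (hR : R.Finite) (hL : L.Finite) : (stateTerms R L).Finite := by
  have hbase : {t | t ∈ L ∨ ∃ lr ∈ R, t = lr.1 ∨ t = lr.2}.Finite := by
    refine (hL.union ((hR.image Prod.fst).union (hR.image Prod.snd))).subset ?_
    rintro t (ht | ⟨lr, hlr, rfl | rfl⟩)
    · exact .inl ht
    · exact .inr (.inl ⟨lr, hlr, rfl⟩)
    · exact .inr (.inr ⟨lr, hlr, rfl⟩)
  obtain ⟨H, hH⟩ := (hbase.image height).bddAbove
  have hbound : ∀ s ∈ groundSubterms R L, s.height ≤ H := fun s ⟨_, t, ht, hst⟩ =>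
    hst.height_le.trans (hH ⟨t, ht, rfl⟩)
  refine (finite_ground_height_le (H + H)).subset ?_
  rintro t ⟨w, g, hw, hg, rfl⟩
  have hwH : w.height ≤ H := by
    rcases hw with ⟨lr, hlr, hw⟩ | hw
    · exact hw.height_le.trans (hH ⟨lr.2, .inr ⟨lr, hlr, .inr rfl⟩, rfl⟩)
    · exact hbound w hw
  exact ⟨ground_subst fun x hx => (hg x hx).1,
    (height_subst_le fun x hx => hbound _ (hg x hx)).trans (by omega)⟩

end States

section Spine

open Tm

variable {σ : Type} {ar : σ → ℕ}

def SpineAgree (A B : Tm σ ar) (π : List ℕ) : Prop :=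
  ∀ δ, δ <+: π → δ ≠ π → ∃ (h : σ) (cs ds : Fin (ar h) → Tm σ ar),
    A.subAt δ = some (app h cs) ∧ B.subAt δ = some (app h ds)

theorem SpineAgree.right {A B : Tm σ ar} {π : List ℕ} (h : SpineAgree A B π) :
    SpineAgree B B π := fun δ hδ hne =>
  let ⟨g, _, ds, _, hB⟩ := h δ hδ hne
  ⟨g, ds, ds, hB, hB⟩

theorem spineAgree_nil (A B : Tm σ ar) : SpineAgree A B [] :=
  fun _ hδ hne => (hne (List.prefix_nil.1 hδ)).elim

theorem SpineAgree.snoc {A B : Tm σ ar} {γ : List ℕ} (h : SpineAgree A B γ) {f : σ}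
    {cs ds : Fin (ar f) → Tm σ ar} (hA : A.subAt γ = some (app f cs))
    (hB : B.subAt γ = some (app f ds)) (i : Fin (ar f)) : SpineAgree A B (γ ++ [(i : ℕ)]) := by
  intro δ hδ hne
  rcases List.prefix_concat_iff.1 hδ with rfl | hδ
  · exact (hne rfl).elim
  · by_cases hδγ : δ = γ
    · subst hδγ
      exact ⟨f, cs, ds, hA, hB⟩
    · exact h δ hδ hδγ

theorem SpineAgree.cons {A B : Tm σ ar} {j : ℕ} {ρ : List ℕ} (h : SpineAgree A B (j :: ρ)) :
    ∃ (g : σ) (cs ds : Fin (ar g) → Tm σ ar), A = app g cs ∧ B = app g ds ∧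
      ∀ i : Fin (ar g), (i : ℕ) = j → SpineAgree (cs i) (ds i) ρ := by
  obtain ⟨g, cs, ds, hA, hB⟩ := h [] List.nil_prefix (List.cons_ne_nil _ _).symm
  rw [subAt_nil, Option.some_inj] at hA hB
  subst hA hB
  refine ⟨g, cs, ds, rfl, rfl, fun i hij δ hδ hne => ?_⟩
  obtain ⟨g', cs', ds', hA, hB⟩ := h (j :: δ) (List.cons_prefix_cons.2 ⟨rfl, hδ⟩)
    (fun he => hne (List.cons.inj he).2)
  subst hij
  simp only [subAt, i.isLt, dif_pos] at hA hB
  exact ⟨g', cs', ds', hA, hB⟩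

def freshVar (N : ℕ) (δ : List ℕ) : ℕ := N + Encodable.encode δ

theorem freshVar_injective (N : ℕ) : Function.Injective (freshVar N) := fun _ _ h =>
  Encodable.encode_injective (Nat.add_left_cancel h)

/-- The linear generalization of `t` along the position `ρ`: the symbols of `t` at the proper
prefixes of `ρ` are kept and every other maximal subterm is replaced by the fresh variable
`freshVar N δ'`, `δ'` its position (`δ` being the position of `t` itself). -/
def spine (N : ℕ) : Tm σ ar → List ℕ → List ℕ → Tm σ ar
  | app h ts, j :: ρ, δ =>
    app h fun i => spine N (ts i) (if (i : ℕ) = j then ρ else []) (δ ++ [(i : ℕ)])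
  | _, _, δ => var (freshVar N δ)

/-- Sends the fresh variable named `δ` to the subterm of `X` at `δ`. -/
noncomputable def chunkSub (N : ℕ) (X : Tm σ ar) (n : ℕ) : Tm σ ar :=
  if N ≤ n then
    match (Encodable.decode (n - N) : Option (List ℕ)) with
    | some δ => (X.subAt δ).getD (var n)
    | none => var n
  else var n

theorem chunkSub_freshVar (N : ℕ) (X : Tm σ ar) (δ : List ℕ) :
    chunkSub N X (freshVar N δ) = (X.subAt δ).getD (var (freshVar N δ)) := by
  simp [chunkSub, freshVar]

theorem spine_subst_chunkSub {N : ℕ} {X : Tm σ ar} (t : Tm σ ar) {a : Tm σ ar} {ρ δ : List ℕ}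
    (hsp : SpineAgree a t ρ) (hX : X.subAt δ = some a) :
    (spine N t ρ δ).subst (chunkSub N X) = a := by
  induction t generalizing a ρ δ with
  | var n =>
    cases ρ with
    | nil => simp [spine, subst, chunkSub_freshVar, hX]
    | cons j ρ => obtain ⟨_, _, _, _, ⟨⟩, _⟩ := hsp.cons
  | app h ts ih =>
    cases ρ with
    | nil => simp [spine, subst, chunkSub_freshVar, hX]
    | cons j ρ =>
      obtain ⟨g, cs, ds, rfl, hB, hch⟩ := hsp.cons
      injection hB with hg hds
      subst hg
      obtain rfl := eq_of_heq hds
      refine congrArg (app h) (funext fun i => ih i ?_ (subAt_append_child hX i))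
      split_ifs with hij
      · exact hch i hij
      · exact spineAgree_nil _ _

theorem vars_spine {N : ℕ} (t : Tm σ ar) {ρ δ : List ℕ} {n : ℕ} (hn : n ∈ (spine N t ρ δ).vars) :
    ∃ δ', δ <+: δ' ∧ n = freshVar N δ' := by
  induction t generalizing ρ δ with
  | var m => cases ρ <;> exact ⟨δ, List.prefix_refl δ, hn⟩
  | app h ts ih =>
    cases ρ with
    | nil => exact ⟨δ, List.prefix_refl δ, hn⟩
    | cons j ρ =>
      obtain ⟨i, hi⟩ := Set.mem_iUnion.1 hn
      obtain ⟨δ', hδ', rfl⟩ := ih i hi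
      exact ⟨δ', (List.prefix_append δ _).trans hδ', rfl⟩

theorem linear_spine {N : ℕ} (t : Tm σ ar) (ρ δ : List ℕ) : (spine N t ρ δ).Linear := by
  induction t generalizing ρ δ with
  | var m => cases ρ <;> exact linear_var _
  | app h ts ih =>
    cases ρ with
    | nil => exact linear_var _
    | cons j ρ =>
      refine linear_app (fun i => ih i _ _) fun i₁ i₂ hne => Set.disjoint_left.2 fun n h₁ h₂ => ?_
      obtain ⟨δ₁, hδ₁, rfl⟩ := vars_spine _ h₁
      obtain ⟨δ₂, hδ₂, he⟩ := vars_spine _ h₂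
      obtain rfl := freshVar_injective N he
      have h12 : δ ++ [(i₁ : ℕ)] = δ ++ [(i₂ : ℕ)] :=
        (List.prefix_of_prefix_length_le hδ₁ hδ₂ (by simp)).eq_of_length (by simp)
      exact hne (Fin.ext (by simpa using h12))

theorem spine_subAt {N : ℕ} (t : Tm σ ar) {ρ δ : List ℕ} {v : Tm σ ar} (hv : t.subAt ρ = some v) :
    (spine N t ρ δ).subAt ρ = some (var (freshVar N (δ ++ ρ))) := by
  induction t generalizing ρ δ with
  | var m =>
    cases ρ with
    | nil => simp [spine, subAt]
    | cons j ρ => cases hv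
  | app h ts ih =>
    cases ρ with
    | nil => simp [spine, subAt]
    | cons j ρ =>
      simp only [subAt] at hv
      split at hv
      · simp [spine, subAt, *, ih _ hv (δ := δ ++ [j])]
      · cases hv

end Spine

section Overlap

open Tm

variable {σ : Type} {ar : σ → ℕ}

theorem isMGU_of_subst_eq {θ : ℕ → Tm σ ar} {a b : Tm σ ar} (ha : a.subst θ = a)
    (hb : b.subst θ = a) (hθ : ∀ n ∉ b.vars, θ n = var n) : IsMGU θ a b := by
  refine ⟨ha.trans hb.symm, fun τ hτ => ⟨τ, fun n => ?_⟩⟩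
  by_cases hn : n ∈ b.vars
  · have : b.subst τ = b.subst fun n => (θ n).subst τ := by
      rw [← subst_subst, hb]
      exact hτ.symm
    exact eq_of_subst_eq this n hn
  · rw [hθ n hn]
    rfl

/-- The GSM condition is applied to the linear generalization `l₃` of `B` along `π`: the most
general unifier of `A` and `l₃` maps the fresh variable at `π` to `c`. -/
theorem GSM.ground_of_spineAgree {R : Set (Tm σ ar × Tm σ ar)} (hgsm : GSM R)
    (hvars : ∀ lr ∈ R, lr.2.vars ⊆ lr.1.vars) {l₁ r₁ l₂ r₂ A B c : Tm σ ar} {α β π : List ℕ}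
    {y : ℕ} (h₁ : (l₁, r₁) ∈ R) (h₂ : (l₂, r₂) ∈ R) (hαβ : α = [] ∨ β = [])
    (hA : r₁.subAt α = some A) (hB : l₂.subAt β = some B) (hsp : SpineAgree A B π)
    (hπ : π ≠ []) (hc : A.subAt π = some c) (hy : B.subAt π = some (var y))
    (hcnv : ¬ IsVarTm c) : c.Ground := by
  classical
  obtain ⟨M, hM⟩ := (vars_finite l₁).bddAbove
  set N := M + 1
  have hAN : ∀ x ∈ A.vars, x < N := fun x hx =>
    Nat.lt_succ_of_le (hM (hvars _ h₁ ((subtm_of_subAt hA).vars_subset hx)))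
  set l₃ := spine N B π []
  have hl₃N : ∀ n ∈ l₃.vars, N ≤ n := fun n hn => by
    obtain ⟨δ, -, rfl⟩ := vars_spine B hn
    exact Nat.le_add_right N _
  let θ n := if n ∈ l₃.vars then chunkSub N A n else var n
  have hθl₃ : l₃.subst θ = A := by
    rw [subst_congr fun x hx => if_pos hx]
    exact spine_subst_chunkSub B hsp (subAt_nil A)
  have hθA : A.subst θ = A := subst_eq_self fun x hx =>
    if_neg fun hx' => absurd (hl₃N x hx') (Nat.not_le.2 (hAN x hx))
  have hmgu : IsMGU θ A l₃ := isMGU_of_subst_eq hθA hθl₃ fun n hn => if_neg hn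
  have hsup : Supertree l₃ B :=
    ⟨linear_spine B π [], chunkSub N B, spine_subst_chunkSub B hsp.right (subAt_nil B)⟩
  have hdisj : ∀ n ∈ l₃.vars, n ∉ l₁.vars := fun n hn hn₁ =>
    absurd (hl₃N n hn) (Nat.not_le.2 (Nat.lt_succ_of_le (hM hn₁)))
  have hend : l₃.subAt π = some (var (freshVar N π)) := by
    simpa using spine_subAt (N := N) (δ := []) B hy
  rcases hgsm.2 l₁ r₁ l₂ r₂ h₁ h₂ α β A B hA hB l₃ hsup hdisj hαβ θ hmgu with hBvar | hvar
  · obtain ⟨g, cs, ds, -, hBapp⟩ := hsp [] List.nil_prefix (Ne.symm hπ)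
    obtain ⟨n, rfl⟩ := hBvar
    cases hBapp
  · have hθπ : (var (freshVar N π)).subst θ = c := by
      have hmem : freshVar N π ∈ l₃.vars := (subtm_of_subAt hend).vars_subset rfl
      simp [θ, subst, hmem, chunkSub_freshVar, hc]
    have := hvar π _ hend ⟨var y, by rw [subAt_append_of_eq hB, hy], y, rfl⟩
    rw [hθπ] at this
    exact this.resolve_left hcnv

end Overlap

section Lifting

open Tm

variable {σ : Type} {ar : σ → ℕ} {R : Set (Tm σ ar × Tm σ ar)} {L : Set (Tm σ ar)}

variable (R) in
/-- The situation of the GSM condition, met while matching the left-hand side `l₂` against the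
piece `w` of the right-hand side `r₁`. -/
def Overlap (w l₂ : Tm σ ar) (pos : List ℕ) : Prop :=
  ∃ (l₁ r₁ A B : Tm σ ar) (α β γ : List ℕ), (l₁, r₁) ∈ R ∧ (α = [] ∨ β = []) ∧
    r₁.subAt α = some A ∧ l₂.subAt β = some B ∧ pos = β ++ γ ∧ A.subAt γ = some w ∧
    SpineAgree A B γ

variable (R L) in
def Admissible (w l₂ : Tm σ ar) (pos : List ℕ) : Prop :=
  w ∈ groundSubterms R L ∨ Overlap R w l₂ pos

variable (R L) in
def AncestorOn (ν : ℕ) (t : Tm σ ar) (g θ : ℕ → Tm σ ar) : Prop :=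
  ∀ x ∈ t.vars, g x ∈ groundSubterms R L ∧ ∃ m ≤ ν, StepsN R m (g x) (θ x)

variable (R L) in
/-- A reduction of length `k` from an admissible `w θ'` to an instance `u θ` of the subterm `u` of
a left-hand side can be replayed from `w g`, for `g` an `m`-ancestor of `θ'` with `k + m ≤ ν`, and
then reaches `u θh` for a `ν`-ancestor `θh` of `θ`. -/
def Lifts (ν : ℕ) (u : Tm σ ar) : Prop :=
  ∀ (l₂ r₂ : Tm σ ar) (pos : List ℕ), (l₂, r₂) ∈ R → l₂.subAt pos = some u →
  ∀ (w : Tm σ ar) (g θ' θ : ℕ → Tm σ ar) (k m : ℕ), k + m ≤ ν → ¬ IsVarTm w →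
    Admissible R L w l₂ pos → AncestorOn R L m w g θ' → StepsN R k (w.subst θ') (u.subst θ) →
    ∃ θh, AncestorOn R L ν u θh θ ∧ Steps R (w.subst g) (u.subst θh)

theorem overlap_rhs {l₁ r₁ l₂ u : Tm σ ar} {pos : List ℕ} (h₁ : (l₁, r₁) ∈ R)
    (hpos : l₂.subAt pos = some u) : Overlap R r₁ l₂ pos :=
  ⟨l₁, r₁, r₁, u, [], pos, [], h₁, .inl rfl, subAt_nil r₁, hpos, (List.append_nil pos).symm,
    subAt_nil r₁, spineAgree_nil r₁ u⟩

theorem IsPattern.admissible_root {w : Tm σ ar} (hw : IsPattern R L w) (l' : Tm σ ar) :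
    Admissible R L w l' [] := by
  rcases hw with ⟨⟨l₁, r₁⟩, h₁, hw⟩ | hw
  · obtain ⟨α, hα⟩ := subtm_iff_exists_subAt.1 hw
    exact .inr ⟨l₁, r₁, w, l', α, [], [], h₁, .inr rfl, hα, subAt_nil l', rfl, subAt_nil w,
      spineAgree_nil w l'⟩
  · exact .inl hw

theorem Admissible.isPattern {w l₂ : Tm σ ar} {pos : List ℕ} (h : Admissible R L w l₂ pos) :
    IsPattern R L w := by
  rcases h with hw | ⟨l₁, r₁, A, -, α, -, γ, h₁, -, hA, -, -, hw, -⟩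
  · exact .inr hw
  · exact .inl ⟨(l₁, r₁), h₁, (subtm_of_subAt hw).trans (subtm_of_subAt hA)⟩

theorem Admissible.child {f : σ} {ws us : Fin (ar f) → Tm σ ar} {l₂ : Tm σ ar} {pos : List ℕ}
    (h : Admissible R L (app f ws) l₂ pos) (hpos : l₂.subAt pos = some (app f us))
    (i : Fin (ar f)) : Admissible R L (ws i) l₂ (pos ++ [(i : ℕ)]) := by
  rcases h with hw | ⟨l₁, r₁, A, B, α, β, γ, h₁, hαβ, hA, hB, rfl, hw, hsp⟩
  · exact .inl (mem_groundSubterms_of_subtm hw (.app i (.refl _)))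
  · have hBγ : B.subAt γ = some (app f us) := by rwa [← subAt_append_of_eq hB]
    exact .inr ⟨l₁, r₁, A, B, α, β, γ ++ [(i : ℕ)], h₁, hαβ, hA, hB, List.append_assoc _ _ _,
      subAt_append_child hw i, hsp.snoc hw hBγ i⟩

theorem Admissible.mem_groundSubterms_of_var (hgsm : GSM R)
    (hvars : ∀ lr ∈ R, lr.2.vars ⊆ lr.1.vars) {f : σ} {ws us : Fin (ar f) → Tm σ ar}
    {l₂ r₂ : Tm σ ar} {pos : List ℕ} {i : Fin (ar f)} {y : ℕ} (h : Admissible R L (app f ws) l₂ pos)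
    (h₂ : (l₂, r₂) ∈ R) (hpos : l₂.subAt pos = some (app f us)) (hy : us i = var y)
    (hw : ¬ IsVarTm (ws i)) : ws i ∈ groundSubterms R L := by
  rcases h with hG | ⟨l₁, r₁, A, B, α, β, γ, h₁, hαβ, hA, hB, rfl, hwγ, hsp⟩
  · exact mem_groundSubterms_of_subtm hG (.app i (.refl _))
  · have hBγ : B.subAt γ = some (app f us) := by rwa [← subAt_append_of_eq hB]
    have hwi := subAt_append_child hwγ i
    have hground := hgsm.ground_of_spineAgree hvars h₁ h₂ hαβ hA hB (hsp.snoc hwγ hBγ i)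
      (by simp) hwi (by rw [subAt_append_child hBγ i, hy]) hw
    exact ⟨hground, r₁, .inr ⟨_, h₁, .inr rfl⟩, (subtm_of_subAt hwi).trans (subtm_of_subAt hA)⟩

theorem AncestorOn.mono {ν ν' : ℕ} {t : Tm σ ar} {g θ : ℕ → Tm σ ar} (h : AncestorOn R L ν t g θ)
    (hν : ν ≤ ν') : AncestorOn R L ν' t g θ := fun x hx =>
  let ⟨hG, m, hm, hst⟩ := h x hx
  ⟨hG, m, hm.trans hν, hst⟩

theorem AncestorOn.anti {ν : ℕ} {t t' : Tm σ ar} {g θ : ℕ → Tm σ ar} (h : AncestorOn R L ν t g θ)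
    (ht : t'.vars ⊆ t.vars) : AncestorOn R L ν t' g θ := fun x hx => h x (ht hx)

theorem ancestorOn_refl {t : Tm σ ar} {g : ℕ → Tm σ ar}
    (hg : ∀ x ∈ t.vars, g x ∈ groundSubterms R L) : AncestorOn R L 0 t g g := fun x hx =>
  ⟨hg x hx, 0, le_rfl, .refl _⟩

theorem exists_lift_of_groundSubterm {ν n : ℕ} {l₂ r₂ u w : Tm σ ar} {pos : List ℕ}
    {θ : ℕ → Tm σ ar} (hlift : ¬ IsVarTm u → Lifts R L ν u) (h₂ : (l₂, r₂) ∈ R)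
    (hpos : l₂.subAt pos = some u) (hw : w ∈ groundSubterms R L) (hn : n ≤ ν)
    (h : StepsN R n w (u.subst θ)) : ∃ θh, AncestorOn R L ν u θh θ ∧ Steps R w (u.subst θh) := by
  cases u with
  | var y => exact ⟨fun _ => w, fun x hx => ⟨hw, n, hn, hx ▸ h⟩, .refl⟩
  | app f us =>
    have hg : AncestorOn R L 0 w var var := fun x hx => by
      simp [ground_iff_vars_eq_empty.1 hw.1] at hx
    simpa using hlift not_isVarTm_app l₂ r₂ pos h₂ hpos w var var θ n 0 (by omega)
      hw.1.not_isVarTm (.inl hw) hg (by simpa using h)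

theorem exists_lift_child (hgsm : GSM R) (hvars : ∀ lr ∈ R, lr.2.vars ⊆ lr.1.vars) {ν k m : ℕ}
    {f : σ} {ws us : Fin (ar f) → Tm σ ar} {l₂ r₂ : Tm σ ar} {pos : List ℕ}
    {g θ' θ : ℕ → Tm σ ar} (i : Fin (ar f)) (hlift : ¬ IsVarTm (us i) → Lifts R L ν (us i))
    (h₂ : (l₂, r₂) ∈ R) (hpos : l₂.subAt pos = some (app f us))
    (hadm : Admissible R L (app f ws) l₂ pos) (hg : AncestorOn R L m (app f ws) g θ')
    (hk : k + m ≤ ν) (hsteps : StepsN R k ((ws i).subst θ') ((us i).subst θ)) :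
    ∃ θi, AncestorOn R L ν (us i) θi θ ∧ Steps R ((ws i).subst g) ((us i).subst θi) := by
  have hposi := subAt_append_child hpos i
  by_cases hwi : IsVarTm (ws i)
  · obtain ⟨x, hx⟩ := hwi
    obtain ⟨hgx, m', hm', hlink⟩ := hg x (mem_vars_app (i := i) (by rw [hx]; rfl))
    rw [hx] at hsteps ⊢
    exact exists_lift_of_groundSubterm hlift h₂ hposi hgx (by omega) (hlink.trans hsteps)
  by_cases hui : IsVarTm (us i)
  · obtain ⟨y, hy⟩ := hui
    have hG := hadm.mem_groundSubterms_of_var hgsm hvars h₂ hpos hy hwi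
    rw [hG.1.subst_eq] at hsteps ⊢
    exact exists_lift_of_groundSubterm hlift h₂ hposi hG (by omega) hsteps
  · exact hlift hui l₂ r₂ _ h₂ hposi (ws i) g θ' θ k m hk hwi (hadm.child hpos i)
      (hg.anti fun _ => mem_vars_app) hsteps

theorem exists_lift_of_nonRoot (hgsm : GSM R) (hvars : ∀ lr ∈ R, lr.2.vars ⊆ lr.1.vars)
    (hll : LeftLinearTRS R) {ν k m : ℕ} {fw f : σ} {ws : Fin (ar fw) → Tm σ ar}
    {us : Fin (ar f) → Tm σ ar} {l₂ r₂ : Tm σ ar} {pos : List ℕ} {g θ' θ : ℕ → Tm σ ar}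
    (hlift : ∀ i, ¬ IsVarTm (us i) → Lifts R L ν (us i)) (h₂ : (l₂, r₂) ∈ R)
    (hpos : l₂.subAt pos = some (app f us)) (hadm : Admissible R L (app fw ws) l₂ pos)
    (hg : AncestorOn R L m (app fw ws) g θ') (hk : k + m ≤ ν)
    (hsteps : NonRootStepsN R k ((app fw ws).subst θ') ((app f us).subst θ)) :
    ∃ θh, AncestorOn R L ν (app f us) θh θ ∧
      Steps R ((app fw ws).subst g) ((app f us).subst θh) := by
  obtain ⟨bs, ks, hb, hks⟩ := hsteps.exists_of_app
  injection hb with hf hbs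
  subst hf
  obtain rfl := eq_of_heq hbs
  choose θs hθs hstep using fun i =>
    exists_lift_child hgsm hvars i (hlift i) h₂ hpos hadm hg (by have := (hks i).1; omega)
      (hks i).2
  obtain ⟨θh, hθh⟩ := ((hll _ h₂).of_subtm (subtm_of_subAt hpos)).exists_subst_eq_on_children θs
  refine ⟨θh, fun x hx => ?_, Steps.app_congr fun i => ?_⟩
  · obtain ⟨i, hi⟩ := Set.mem_iUnion.1 hx
    rw [hθh i x hi]
    exact hθs i x hi
  · rw [subst_congr (hθh i)]
    exact hstep i

theorem exists_lift_of_root (hgsm : GSM R) (hvars : ∀ lr ∈ R, lr.2.vars ⊆ lr.1.vars)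
    {ν j k m : ℕ} {l₂ r₂ u w l' r' : Tm σ ar} {pos : List ℕ} {g θ' θ τ : ℕ → Tm σ ar}
    (hlift : ∀ ν' < ν, ∀ u : Tm σ ar, ¬ IsVarTm u → Lifts R L ν' u) (h₂ : (l₂, r₂) ∈ R)
    (hpos : l₂.subAt pos = some u) (hu : ¬ IsVarTm u) (hw : ¬ IsVarTm w)
    (hadm : Admissible R L w l₂ pos) (hg : AncestorOn R L m w g θ') (hk : j + 1 + k + m ≤ ν)
    (hl'r' : (l', r') ∈ R) (hpre : StepsN R j (w.subst θ') (l'.subst τ))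
    (hsuf : NonRootStepsN R k (r'.subst τ) (u.subst θ)) :
    ∃ θh, AncestorOn R L ν u θh θ ∧ Steps R (w.subst g) (u.subst θh) := by
  obtain ⟨gh, hgh, hlhs⟩ := hlift (j + m) (by omega) l' (hgsm.1 _ hl'r') l' r' [] hl'r'
    (subAt_nil l') w g θ' τ j m le_rfl hw (hadm.isPattern.admissible_root l') hg hpre
  have hrule : Steps R (w.subst g) (r'.subst gh) := hlhs.tail (Step.rule gh hl'r')
  cases r' with
  | var y =>
    obtain ⟨hG, m', hm', hlink⟩ := hgh y (hvars _ hl'r' rfl)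
    obtain ⟨θh, hθh, hst⟩ := exists_lift_of_groundSubterm (hlift (m' + k) (by omega) u) h₂ hpos
      hG le_rfl (hlink.trans hsuf.stepsN)
    exact ⟨θh, hθh.mono (by omega), hrule.trans hst⟩
  | app fr rs =>
    obtain ⟨θh, hθh, hst⟩ := hlift (k + (j + m)) (by omega) u hu l₂ r₂ pos h₂ hpos _ gh τ θ k
      (j + m) le_rfl not_isVarTm_app (.inr (overlap_rhs hl'r' hpos))
      (hgh.anti (hvars _ hl'r')) hsuf.stepsN
    exact ⟨θh, hθh.mono (by omega), hrule.trans hst⟩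

theorem lifts_of_gsm (hgsm : GSM R) (hvars : ∀ lr ∈ R, lr.2.vars ⊆ lr.1.vars)
    (hll : LeftLinearTRS R) (ν : ℕ) (u : Tm σ ar) (hu : ¬ IsVarTm u) : Lifts R L ν u := by
  induction ν using Nat.strong_induction_on generalizing u with
  | _ ν IHν =>
  induction u with
  | var n => exact absurd ⟨n, rfl⟩ hu
  | app f us IHu =>
  intro l₂ r₂ pos h₂ hpos w g θ' θ k m hk hw hadm hg hsteps
  cases w with
  | var x => exact absurd ⟨x, rfl⟩ hw
  | app fw ws =>
  rcases hsteps.nonRoot_or_root with hnr | ⟨j, k', l', r', τ, hl'r', rfl, hpre, hsuf⟩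
  · exact exists_lift_of_nonRoot hgsm hvars hll IHu h₂ hpos hadm hg hk hnr
  · exact exists_lift_of_root hgsm hvars IHν h₂ hpos hu hw hadm hg hk hl'r' hpre hsuf

theorem exists_factor_of_nonRoot {ν k : ℕ} {w : Tm σ ar} {g θ : ℕ → Tm σ ar} {f : σ}
    {ps : Fin (ar f) → Tm σ ar} (hw : IsPattern R L w) (hwnv : ¬ IsVarTm w)
    (hg : AncestorOn R L ν w g θ) (h : NonRootStepsN R k (w.subst θ) (app f ps)) :
    ∃ ts, (∀ i, ts i ∈ stateTerms R L ∧ Steps R (ts i) (ps i)) ∧ w.subst g = app f ts := by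
  cases w with
  | var x => exact absurd ⟨x, rfl⟩ hwnv
  | app fw ws =>
    obtain ⟨bs, ks, hb, hks⟩ := h.exists_of_app
    injection hb with hf hbs
    subst hf
    obtain rfl := eq_of_heq hbs
    refine ⟨fun i => (ws i).subst g, fun i => ⟨⟨ws i, g, hw.child i,
      fun x hx => (hg x (mem_vars_app hx)).1, rfl⟩, ?_⟩, rfl⟩
    refine (Steps.subst fun x hx => ?_).trans (hks i).2.steps
    obtain ⟨-, m, -, hst⟩ := hg x (mem_vars_app hx)
    exact hst.steps

theorem factorizes_stateTerms (hgsm : GSM R) (hvars : ∀ lr ∈ R, lr.2.vars ⊆ lr.1.vars)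
    (hll : LeftLinearTRS R) : Factorizes R (stateTerms R L) := by
  intro t ht f ps hsteps
  obtain ⟨n, h⟩ := steps_iff_exists_stepsN.1 hsteps
  clear hsteps
  induction n using Nat.strong_induction_on generalizing t with
  | _ n IH =>
  obtain ⟨w, g, hw, hwnv, hg, rfl⟩ := exists_app_pattern_of_mem_stateTerms ht
  rcases h.nonRoot_or_root with hnr | ⟨j, k, l', r', τ, hl'r', rfl, hpre, hsuf⟩
  · obtain ⟨ts, hts, heq⟩ := exists_factor_of_nonRoot hw hwnv (ancestorOn_refl hg) hnr
    exact ⟨ts, hts, heq ▸ .refl⟩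
  obtain ⟨gh, hgh, hlhs⟩ := lifts_of_gsm hgsm hvars hll j l' (hgsm.1 _ hl'r') l' r' [] hl'r'
    (subAt_nil l') w g g τ j 0 le_rfl hwnv (hw.admissible_root l') (ancestorOn_refl hg) hpre
  have hrule : Steps R (w.subst g) (r'.subst gh) := hlhs.tail (Step.rule gh hl'r')
  by_cases hr' : IsVarTm r'
  · obtain ⟨y, rfl⟩ := hr'
    obtain ⟨hG, m, hm, hlink⟩ := hgh y (hvars _ hl'r' rfl)
    obtain ⟨ts, hts, hst⟩ := IH (m + k) (by omega) _ (groundSubterms_subset_stateTerms hG)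
      (hlink.trans hsuf.stepsN)
    exact ⟨ts, hts, hrule.trans hst⟩
  · obtain ⟨ts, hts, heq⟩ := exists_factor_of_nonRoot (.inl ⟨_, hl'r', .refl _⟩) hr'
      (hgh.anti (hvars _ hl'r')) hsuf
    exact ⟨ts, hts, heq ▸ hrule⟩

end Lifting

theorem stmt_7 {σ : Type} {ar : σ → ℕ} [Finite σ]
    (R : Set (Tm σ ar × Tm σ ar)) (hR : IsTRS R)
    (hll : LeftLinearTRS R) (hgsm : GSM R)
    (L : Set (Tm σ ar)) (hfin : L.Finite) (hground : ∀ t ∈ L, t.Ground) :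
    Recognizable (Desc R L) :=
  recognizable_desc_of_factorizes hR.2 (stateTerms_finite hR.1 hfin)
    (fun _ ht => groundSubterms_subset_stateTerms (subset_groundSubterms hground ht)) hground
    (factorizes_stateTerms hgsm hR.2 hll)
end

section
/- Let R be a TRS over a ranked alphabet Σ, let m ≥ 0, let Z = {z₁,…,z_m} be fresh constants with Z ∩ Σ = ∅, and for t ∈ T_Σ(X_m) let t_z ∈ T_{Σ∪Z} be obtained by replacing each xᵢ by zᵢ. Then for any p, q ∈ T_Σ(X_m), there exists a term r ∈ T_Σ(X) with p →*_R r and q →*_R r if and only if R*_{Σ∪Z}({p_z}) ∩ R*_{Σ∪Z}({q_z}) ≠ ∅. -/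
set_option autoImplicit false

/-! ### Fresh constants `z₁,…,z_m` (used in Statements 11–13): the alphabet
`σ ⊕ Fin m`, where `Sum.inr i` is the fresh constant `z_{i+1}`. -/

/-- Arity function of `Σ ∪ Z`. -/
def arZ {σ : Type} (ar : σ → ℕ) (m : ℕ) : σ ⊕ Fin m → ℕ :=
  Sum.elim ar fun _ => 0

/-- `t_z`: replace every occurrence of the variable `xᵢ` (`1 ≤ i ≤ m`,
i.e. `Tm.var n` with `n < m`) by the constant `zᵢ`. -/
def tmToZ {σ : Type} {ar : σ → ℕ} (m : ℕ) : Tm σ ar → Tm (σ ⊕ Fin m) (arZ ar m)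
  | .var n => if h : n < m then .app (Sum.inr ⟨n, h⟩) ![] else .var n
  | .app f ts => .app (Sum.inl f) fun i => tmToZ m (ts i)

/-!
Sending each fresh constant `zᵢ` back to the variable `xᵢ` gives a left inverse of `t ↦ t_z`.
Both translations commute with instances of rules of `R` (which contain no `zᵢ`), so each maps
`R`-steps to `R`-steps; hence a common reduct of `p` and `q` yields one of `p_z` and `q_z`, and
conversely.
-/

section FreshConstants

variable {σ : Type} {ar : σ → ℕ} {m : ℕ}

def tmOfZ : Tm (σ ⊕ Fin m) (arZ ar m) → Tm σ ar
  | .var n => .var n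
  | .app (.inl f) ts => .app f fun i => tmOfZ (ts i)
  | .app (.inr i) _ => .var i

@[simp]
lemma tmOfZ_tmToZ (t : Tm σ ar) : tmOfZ (tmToZ m t) = t := by
  induction t with
  | var n => by_cases h : n < m <;> simp [tmToZ, tmOfZ, h]
  | app f ts ih => simp [tmToZ, tmOfZ, ih]

lemma tmToZ_subst (θ : ℕ → Tm σ ar) (t : Tm σ ar) :
    tmToZ m (t.subst θ) = (t.map Sum.inl (fun _ => rfl)).subst (tmToZ m ∘ θ) := by
  induction t with
  | var n => rfl
  | app f ts ih =>
    simp only [Tm.subst, tmToZ, Tm.map, Fin.cast_eq_self]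
    exact congrArg _ (funext ih)

lemma tmOfZ_map_subst (θ : ℕ → Tm (σ ⊕ Fin m) (arZ ar m)) (t : Tm σ ar) :
    tmOfZ ((t.map Sum.inl (fun _ => rfl)).subst θ) = t.subst (tmOfZ ∘ θ) := by
  induction t with
  | var n => rfl
  | app f ts ih =>
    simp only [Tm.subst, Tm.map, tmOfZ]
    exact congrArg _ (funext ih)

lemma step_tmToZ {R : Set (Tm σ ar × Tm σ ar)} {s t : Tm σ ar} (h : Step R s t) :
    Step (mapRules Sum.inl (fun _ => rfl) R) (tmToZ m s) (tmToZ m t) := by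
  induction h with
  | @rule l r θ hlr =>
    rw [tmToZ_subst, tmToZ_subst]
    exact Step.rule _ ⟨(l, r), hlr, rfl⟩
  | @congr f ts t' i _ ih =>
    simp only [tmToZ]
    convert Step.congr (f := Sum.inl f) (ts := fun j => tmToZ m (ts j)) i ih using 2
    exact Function.comp_update (tmToZ m) ts i t'

lemma step_tmOfZ {R : Set (Tm σ ar × Tm σ ar)} {u v : Tm (σ ⊕ Fin m) (arZ ar m)}
    (h : Step (mapRules Sum.inl (fun _ => rfl) R) u v) : Step R (tmOfZ u) (tmOfZ v) := by
  induction h with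
  | rule θ hlr =>
    obtain ⟨⟨l, r⟩, hlr, ⟨⟩⟩ := hlr
    exact tmOfZ_map_subst θ l ▸ tmOfZ_map_subst θ r ▸ Step.rule _ hlr
  | @congr f ts t' i _ ih =>
    obtain f | z := f
    · simp only [tmOfZ]
      convert Step.congr (f := f) (ts := fun j => tmOfZ (ts j)) i ih using 2
      exact Function.comp_update tmOfZ ts i t'
    · exact i.elim0

lemma steps_tmToZ {R : Set (Tm σ ar × Tm σ ar)} {s t : Tm σ ar} (h : Steps R s t) :
    Steps (mapRules Sum.inl (fun _ => rfl) R) (tmToZ m s) (tmToZ m t) :=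
  h.lift _ fun _ _ => step_tmToZ

lemma steps_tmOfZ {R : Set (Tm σ ar × Tm σ ar)} {u v : Tm (σ ⊕ Fin m) (arZ ar m)}
    (h : Steps (mapRules Sum.inl (fun _ => rfl) R) u v) : Steps R (tmOfZ u) (tmOfZ v) :=
  h.lift _ fun _ _ => step_tmOfZ

end FreshConstants

theorem stmt_12_general {σ : Type} {ar : σ → ℕ}
    (R : Set (Tm σ ar × Tm σ ar)) (m : ℕ)
    (p q : Tm σ ar) :
    (∃ r : Tm σ ar, Steps R p r ∧ Steps R q r) ↔
      (Desc (mapRules Sum.inl (fun _ => rfl) R) {tmToZ m p} ∩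
        Desc (mapRules Sum.inl (fun _ => rfl) R) {tmToZ m q}).Nonempty := by
  constructor
  · rintro ⟨r, hpr, hqr⟩
    exact ⟨tmToZ m r, ⟨_, rfl, steps_tmToZ hpr⟩, ⟨_, rfl, steps_tmToZ hqr⟩⟩
  · rintro ⟨u, ⟨_, rfl, hpu⟩, ⟨_, rfl, hqu⟩⟩
    exact ⟨tmOfZ u, by simpa using steps_tmOfZ hpu, by simpa using steps_tmOfZ hqu⟩

theorem stmt_12 {σ : Type} {ar : σ → ℕ} [Finite σ]
    (R : Set (Tm σ ar × Tm σ ar)) (hR : IsTRS R) (m : ℕ)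
    (p q : Tm σ ar)
    -- `p, q ∈ T_Σ(X_m)`
    (hp : p.vars ⊆ {n | n < m}) (hq : q.vars ⊆ {n | n < m}) :
    (∃ r : Tm σ ar, Steps R p r ∧ Steps R q r) ↔
      (Desc (mapRules Sum.inl (fun _ => rfl) R) {tmToZ m p} ∩
        Desc (mapRules Sum.inl (fun _ => rfl) R) {tmToZ m q}).Nonempty :=
  stmt_12_general R m p q
end
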